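/- arXiv:1912.04343 — 2 statements merged into one kernel-verified Lean document; each statement's English description precedes it below -/
import Mathlib

section
/- Let ρ ≥ 0 and Δ ≥ 0. If S ⊂ Γ is a uniform subset of Sup(ρ), then the set S_Δ of all Δ-perturbations of sequences in S is again a uniform subset of Sup(ρ). Analogously, if S is a uniform subset of Sdn(ρ), then S_Δ is a uniform subset of Sdn(ρ). -/
open Set Filter

noncomputable section

/-- An (infinite) impulse-time sequence: strictly increasing, positive, with no finite
limit point (i.e. tending to `∞`). -/
def IsImpSeqFun (τ : ℕ → ℝ) : Prop :=
  StrictMono τ ∧ 0 < τ 0 ∧ Filter.Tendsto τ Filter.atTop Filter.atTop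

/-- `seqCnt τ s t` is the number `n^γ_{(s,t]}` of terms of the sequence `τ` lying in `(s, t]`. -/
def seqCnt (τ : ℕ → ℝ) (s t : ℝ) : ℕ := (Set.range τ ∩ Set.Ioc s t).ncard

/-- Membership in the class `Sup(ρ)` (impulse frequency eventually uniformly upper bounded
by `ρ`), for sequences. -/
def SeqMemSup (ρ : ℝ) (τ : ℕ → ℝ) : Prop :=
  IsImpSeqFun τ ∧ ∀ ε : ℝ, 0 < ε → ∃ T : ℝ, 0 < T ∧
    ∀ t : ℝ, T ≤ t → ∀ s : ℝ, 0 ≤ s → (seqCnt τ s (s + t) : ℝ) / t ≤ ρ + ε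

/-- Membership in the class `Sdn(ρ)` (impulse frequency eventually uniformly lower bounded
by `ρ`), for sequences. -/
def SeqMemSdn (ρ : ℝ) (τ : ℕ → ℝ) : Prop :=
  IsImpSeqFun τ ∧ ∀ ε : ℝ, 0 < ε → ∃ T : ℝ, 0 < T ∧
    ∀ t : ℝ, T ≤ t → ∀ s : ℝ, 0 ≤ s → ρ - ε ≤ (seqCnt τ s (s + t) : ℝ) / t

/-- Membership in the average dwell-time class `Sad(n, τADT)`. -/
def SeqMemSad (n : ℕ) (τADT : ℝ) (τ : ℕ → ℝ) : Prop :=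
  IsImpSeqFun τ ∧ ∀ s t : ℝ, 0 ≤ s → s ≤ t → (seqCnt τ s t : ℝ) ≤ (n : ℝ) + (t - s) / τADT

/-- Membership in the reverse average dwell-time class `Srad(n, τADT)`. -/
def SeqMemSrad (n : ℕ) (τADT : ℝ) (τ : ℕ → ℝ) : Prop :=
  IsImpSeqFun τ ∧ ∀ s t : ℝ, 0 ≤ s → s ≤ t → -(n : ℝ) + (t - s) / τADT ≤ (seqCnt τ s t : ℝ)

/-- `τs` is a `Δ`-perturbation of `τ`: with the same index set, `τs k ∈ [τ k − Δ, τ k + Δ]`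
for all `k`. -/
def IsDeltaPert (Δ : ℝ) (τ τs : ℕ → ℝ) : Prop :=
  ∀ k : ℕ, τ k - Δ ≤ τs k ∧ τs k ≤ τ k + Δ

/-- `S` is a uniform subset of `Sup(ρ)` (the time `T` independent of the sequence). -/
def SeqUSubSup (ρ : ℝ) (S : Set (ℕ → ℝ)) : Prop :=
  (∀ τ ∈ S, IsImpSeqFun τ) ∧ ∀ ε : ℝ, 0 < ε → ∃ T : ℝ, 0 < T ∧
    ∀ τ ∈ S, ∀ t : ℝ, T ≤ t → ∀ s : ℝ, 0 ≤ s → (seqCnt τ s (s + t) : ℝ) / t ≤ ρ + ε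

/-- `S` is a uniform subset of `Sdn(ρ)` (the time `T` independent of the sequence). -/
def SeqUSubSdn (ρ : ℝ) (S : Set (ℕ → ℝ)) : Prop :=
  (∀ τ ∈ S, IsImpSeqFun τ) ∧ ∀ ε : ℝ, 0 < ε → ∃ T : ℝ, 0 < T ∧
    ∀ τ ∈ S, ∀ t : ℝ, T ≤ t → ∀ s : ℝ, 0 ≤ s → ρ - ε ≤ (seqCnt τ s (s + t) : ℝ) / t

/-- `S_Δ`: the set of all `Δ`-perturbations (which are impulse-time sequences) of sequences
in `S`. -/
def PertSet (Δ : ℝ) (S : Set (ℕ → ℝ)) : Set (ℕ → ℝ) :=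
  {τs | IsImpSeqFun τs ∧ ∃ τ ∈ S, IsDeltaPert Δ τ τs}

/-! A `Δ`-perturbation moves each impulse by at most `Δ` and keeps its index, so the perturbed
count over a window `(s, s + t]` is at most the original count over the window enlarged by `Δ`
on each side, and at least the original count over the window shrunk by `Δ` on each side.
Changing the window length by `2Δ` moves the bound `(ρ ± ε/2) t` by `O(Δ)`, which the remaining
`ε t / 2` absorbs once `t` is large, uniformly over the set. -/

lemma IsImpSeqFun.pos {τ : ℕ → ℝ} (hτ : IsImpSeqFun τ) (k : ℕ) : 0 < τ k :=
  hτ.2.1.trans_le (hτ.1.monotone k.zero_le)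

lemma finite_setOf_le_of_tendsto_atTop {τ : ℕ → ℝ} (hτ : Tendsto τ atTop atTop) (d : ℝ) :
    {k | τ k ≤ d}.Finite := by
  have hgt : ∀ᶠ k in cofinite, d < τ k := by
    rw [Nat.cofinite_eq_atTop]
    exact hτ.eventually_gt_atTop d
  simpa only [not_lt] using eventually_cofinite.mp hgt

lemma seqCnt_eq_ncard_preimage {τ : ℕ → ℝ} (hτ : Function.Injective τ) (a b : ℝ) :
    seqCnt τ a b = (τ ⁻¹' Ioc a b).ncard := by
  rw [seqCnt, inter_comm, ← image_preimage_eq_inter_range, ncard_image_of_injective _ hτ]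

lemma seqCnt_max_zero_left {τ : ℕ → ℝ} (hτ : ∀ k, 0 < τ k) (a b : ℝ) :
    seqCnt τ (max a 0) b = seqCnt τ a b := by
  unfold seqCnt
  congr 1
  ext x
  simp only [mem_inter_iff, mem_range, mem_Ioc, max_lt_iff]
  constructor
  · rintro ⟨hx, ⟨ha, -⟩, hb⟩
    exact ⟨hx, ha, hb⟩
  · rintro ⟨⟨k, rfl⟩, ha, hb⟩
    exact ⟨⟨k, rfl⟩, ⟨ha, hτ k⟩, hb⟩

lemma IsDeltaPert.symm {Δ : ℝ} {τ σ : ℕ → ℝ} (h : IsDeltaPert Δ τ σ) : IsDeltaPert Δ σ τ :=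
  fun k => ⟨by linarith [h k], by linarith [h k]⟩

lemma IsDeltaPert.seqCnt_le_seqCnt {Δ : ℝ} {τ σ : ℕ → ℝ} (h : IsDeltaPert Δ τ σ)
    (hσ : Function.Injective σ) (hτ : Function.Injective τ) (hτ_lim : Tendsto τ atTop atTop)
    {a b c d : ℝ} (hc : c ≤ a - Δ) (hd : b + Δ ≤ d) : seqCnt σ a b ≤ seqCnt τ c d := by
  rw [seqCnt_eq_ncard_preimage hσ, seqCnt_eq_ncard_preimage hτ]
  refine ncard_le_ncard (fun k ⟨hak, hkb⟩ => ⟨?_, ?_⟩)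
    ((finite_setOf_le_of_tendsto_atTop hτ_lim d).subset fun k hk => hk.2)
  · linarith [h k]
  · linarith [h k]

lemma IsDeltaPert.exists_window_seqCnt_le {Δ : ℝ} (hΔ : 0 ≤ Δ) {τ σ : ℕ → ℝ}
    (h : IsDeltaPert Δ τ σ) (hτ : IsImpSeqFun τ) (hσ : Function.Injective σ) {s : ℝ}
    (hs : 0 ≤ s) (t : ℝ) :
    ∃ s' t', 0 ≤ s' ∧ t ≤ t' ∧ t' ≤ t + 2 * Δ ∧ seqCnt σ s (s + t) ≤ seqCnt τ s' (s' + t') := by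
  refine ⟨max (s - Δ) 0, s + t + Δ - max (s - Δ) 0, le_max_right _ _, ?_, ?_, ?_⟩
  · linarith [max_le (by linarith : s - Δ ≤ s + Δ) (by linarith : (0 : ℝ) ≤ s + Δ)]
  · linarith [le_max_left (s - Δ) 0]
  · rw [add_sub_cancel, seqCnt_max_zero_left hτ.pos]
    exact h.seqCnt_le_seqCnt hσ hτ.1.injective hτ.2.2 le_rfl le_rfl

lemma IsDeltaPert.exists_window_le_seqCnt {Δ : ℝ} (hΔ : 0 ≤ Δ) {τ σ : ℕ → ℝ}
    (h : IsDeltaPert Δ τ σ) (hτ : Function.Injective τ) (hσ : IsImpSeqFun σ) {s : ℝ}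
    (hs : 0 ≤ s) (t : ℝ) :
    ∃ s' t', 0 ≤ s' ∧ t - 2 * Δ ≤ t' ∧ t' ≤ t ∧ seqCnt τ s' (s' + t') ≤ seqCnt σ s (s + t) :=
  ⟨s + Δ, t - 2 * Δ, by linarith, le_rfl, by linarith,
    h.symm.seqCnt_le_seqCnt hτ hσ.1.injective hσ.2.2 (by linarith) (by linarith)⟩

theorem SeqUSubSup.of_seqCnt_le_window {ρ L : ℝ} (hρ : 0 ≤ ρ) {S S' : Set (ℕ → ℝ)}
    (hS : SeqUSubSup ρ S) (hS' : ∀ σ ∈ S', IsImpSeqFun σ)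
    (hwin : ∀ σ ∈ S', ∃ τ ∈ S, ∀ s, 0 ≤ s → ∀ t, ∃ s' t', 0 ≤ s' ∧ t ≤ t' ∧ t' ≤ t + L ∧
      seqCnt σ s (s + t) ≤ seqCnt τ s' (s' + t')) :
    SeqUSubSup ρ S' := by
  refine ⟨hS', fun ε hε => ?_⟩
  obtain ⟨T, hT, hbound⟩ := hS.2 (ε / 2) (half_pos hε)
  refine ⟨max T ((2 * ρ + ε) * L / ε), hT.trans_le (le_max_left _ _), ?_⟩
  intro σ hσ t ht s hs
  obtain ⟨τ, hτ, hcmp⟩ := hwin σ hσ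
  obtain ⟨s', t', hs', htt', ht'L, hcnt⟩ := hcmp s hs t
  have hTt : T ≤ t := (le_max_left _ _).trans ht
  have htL : (2 * ρ + ε) * L ≤ ε * t := by
    rw [← div_le_iff₀' hε]; exact (le_max_right _ _).trans ht
  have ht0 : 0 < t := hT.trans_le hTt
  have hτcnt := hbound τ hτ t' (hTt.trans htt') s' hs'
  rw [div_le_iff₀ (ht0.trans_le htt')] at hτcnt
  rw [div_le_iff₀ ht0]
  calc (seqCnt σ s (s + t) : ℝ) ≤ seqCnt τ s' (s' + t') := by exact_mod_cast hcnt
    _ ≤ (ρ + ε / 2) * t' := hτcnt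
    _ ≤ (ρ + ε / 2) * (t + L) := by gcongr
    _ ≤ (ρ + ε) * t := by linarith

theorem SeqUSubSdn.of_window_le_seqCnt {ρ L : ℝ} (hρ : 0 ≤ ρ) (hL : 0 ≤ L)
    {S S' : Set (ℕ → ℝ)} (hS : SeqUSubSdn ρ S) (hS' : ∀ σ ∈ S', IsImpSeqFun σ)
    (hwin : ∀ σ ∈ S', ∃ τ ∈ S, ∀ s, 0 ≤ s → ∀ t, ∃ s' t', 0 ≤ s' ∧ t - L ≤ t' ∧ t' ≤ t ∧
      seqCnt τ s' (s' + t') ≤ seqCnt σ s (s + t)) :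
    SeqUSubSdn ρ S' := by
  refine ⟨hS', fun ε hε => ?_⟩
  obtain ⟨T, hT, hbound⟩ := hS.2 (ε / 2) (half_pos hε)
  refine ⟨max (T + L) (2 * ρ * L / ε), (by linarith : 0 < T + L).trans_le (le_max_left _ _), ?_⟩
  intro σ hσ t ht s hs
  obtain ⟨τ, hτ, hcmp⟩ := hwin σ hσ
  obtain ⟨s', t', hs', htt', ht't, hcnt⟩ := hcmp s hs t
  have hTt' : T ≤ t' := by linarith [le_max_left (T + L) (2 * ρ * L / ε)]
  have htL : 2 * ρ * L ≤ ε * t := by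
    rw [← div_le_iff₀' hε]; exact (le_max_right _ _).trans ht
  have ht'0 : 0 < t' := hT.trans_le hTt'
  have hτcnt := hbound τ hτ t' hTt' s' hs'
  rw [le_div_iff₀ ht'0] at hτcnt
  rw [le_div_iff₀ (ht'0.trans_le ht't)]
  calc (ρ - ε) * t ≤ ρ * (t - L) - ε / 2 * t' := by
        linarith [mul_le_mul_of_nonneg_left ht't hε.le]
    _ ≤ (ρ - ε / 2) * t' := by linarith [mul_le_mul_of_nonneg_left htt' hρ]
    _ ≤ seqCnt τ s' (s' + t') := hτcnt
    _ ≤ seqCnt σ s (s + t) := by exact_mod_cast hcnt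

/-- Lemma 1 v-b): if `S` is a uniform subset of `Sup(ρ)` (resp. of `Sdn(ρ)`), then the set
`S_Δ` of all `Δ`-perturbations of sequences in `S` is again a uniform subset of `Sup(ρ)`
(resp. of `Sdn(ρ)`). -/
theorem pertSet_usubset (ρ Δ : ℝ) (hρ : 0 ≤ ρ) (hΔ : 0 ≤ Δ) (S : Set (ℕ → ℝ)) :
    (SeqUSubSup ρ S → SeqUSubSup ρ (PertSet Δ S)) ∧
    (SeqUSubSdn ρ S → SeqUSubSdn ρ (PertSet Δ S)) := by
  constructor
  · intro hS
    refine hS.of_seqCnt_le_window (L := 2 * Δ) hρ (fun σ hσ => hσ.1) ?_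
    rintro σ ⟨hσ, τ, hτS, hpert⟩
    exact ⟨τ, hτS, fun s hs => hpert.exists_window_seqCnt_le hΔ (hS.1 τ hτS) hσ.1.injective hs⟩
  · intro hS
    refine hS.of_window_le_seqCnt (L := 2 * Δ) hρ (by positivity) (fun σ hσ => hσ.1) ?_
    rintro σ ⟨hσ, τ, hτS, hpert⟩
    exact ⟨τ, hτS, fun s hs => hpert.exists_window_le_seqCnt hΔ (hS.1 τ hτS).1.injective hσ hs⟩
end
end

section
/- Let φ be of class P and let p : ℝ≥0 → ℝ≥0 be locally integrable, and suppose there exists θ > 0 such that N := inf_{t≥0} ∫_t^{t+θ} p(s) ds > 0. Then there exists β of class KL such that for every t0 ≥ 0 and w0 ≥ 0, every nonnegative locally absolutely continuous function w : [t0,∞) → ℝ≥0 with w(t0) = w0 and w'(t) = −p(t)φ(w(t)) for almost all t ≥ t0 satisfies w(t) ≤ β(w0, t − t0) for all t ≥ t0. -/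
/-!
With `η s = ∫₁ˢ 1/φ`, a solution that is still positive at time `t` satisfies
`η (w t) = η w₀ - ∫_{t₀}^t p`: `w` is absolutely continuous and `η` is Lipschitz on its range, so
the chain rule holds almost everywhere. Cutting `[t₀, t]` into windows of length `θ` gives
`∫_{t₀}^t p ≥ N ((t - t₀)/θ - 1)`, so `η (w t)` is pushed down at a linear rate, and inverting `η`
bounds `w t`. To invert on all of `ℝ`, use `V x = η (exp x) + x` instead, and take
`β r t = exp (V⁻¹ (V (log r) - g t)) + r exp (-t)` with `g t = N max (t/θ - 1) 0`; the last term
makes `β` strictly decreasing in `t`.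
-/

open Set Filter MeasureTheory

noncomputable section

/-- A function of class `P`: continuous on `[0,∞)`, zero at zero, and positive on `(0,∞)`. -/
def ClassP (α : ℝ → ℝ) : Prop :=
  ContinuousOn α (Set.Ici 0) ∧ α 0 = 0 ∧ ∀ s : ℝ, 0 < s → 0 < α s

/-- `p : [0,∞) → [0,∞)` is nonnegative and locally (Lebesgue) integrable. -/
def LocIntNN (p : ℝ → ℝ) : Prop :=
  (∀ s : ℝ, 0 ≤ p s) ∧
    ∀ a b : ℝ, 0 ≤ a → a ≤ b → IntervalIntegrable p MeasureTheory.volume a b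

/-- `N = inf_{t ≥ 0} ∫_t^{t+θ} p(s) ds`. -/
def Nval (p : ℝ → ℝ) (θ : ℝ) : ℝ :=
  sInf {y : ℝ | ∃ t : ℝ, 0 ≤ t ∧ y = ∫ s in t..(t + θ), p s}

/-- `w : [t0,∞) → [0,∞)` is a (forward-in-time, globally defined) solution of the scalar
ODE `ẇ = −p(t)·φ(w)` with `w(t0) = w0`: it is nonnegative and locally absolutely
continuous with `w'(t) = −p(t)φ(w(t))` for a.e. `t ≥ t0`, encoded by the equivalent
integral equation `w(t) = w0 − ∫_{t0}^t p(s)φ(w(s)) ds`. -/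
def IsODESol (p φ : ℝ → ℝ) (t0 w0 : ℝ) (w : ℝ → ℝ) : Prop :=
  w t0 = w0 ∧ (∀ t : ℝ, t0 ≤ t → 0 ≤ w t) ∧
    ∀ t : ℝ, t0 ≤ t →
      IntervalIntegrable (fun s => p s * φ (w s)) MeasureTheory.volume t0 t ∧
      w t = w0 - ∫ s in t0..t, p s * φ (w s)

/-- A function of class `KL`: continuous on `[0,∞)×[0,∞)`, nonnegative there, for each fixed
`t ≥ 0` strictly increasing in the first argument with value `0` at `0`, for each fixed
`r ≥ 0` strictly decreasing in the second argument whenever positive, and tending to `0` as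
the second argument tends to `∞`. -/
def ClassKL (β : ℝ → ℝ → ℝ) : Prop :=
  ContinuousOn (fun q : ℝ × ℝ => β q.1 q.2) (Set.Ici 0 ×ˢ Set.Ici 0) ∧
  (∀ r t : ℝ, 0 ≤ r → 0 ≤ t → 0 ≤ β r t) ∧
  (∀ t : ℝ, 0 ≤ t → StrictMonoOn (fun r => β r t) (Set.Ici 0) ∧ β 0 t = 0) ∧
  (∀ r : ℝ, 0 ≤ r → ∀ t1 t2 : ℝ, 0 ≤ t1 → t1 < t2 → 0 < β r t1 → β r t2 < β r t1) ∧
  (∀ r : ℝ, 0 ≤ r → Filter.Tendsto (fun t => β r t) Filter.atTop (nhds 0))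

open Real Topology

theorem LipschitzOnWith.comp_absolutelyContinuousOnInterval {X Y : Type*} [PseudoMetricSpace X]
    [PseudoMetricSpace Y] {g : X → Y} {K : NNReal} {s : Set X} {f : ℝ → X} {a b : ℝ}
    (hg : LipschitzOnWith K g s) (hf : AbsolutelyContinuousOnInterval f a b)
    (hfs : MapsTo f (uIcc a b) s) : AbsolutelyContinuousOnInterval (g ∘ f) a b := by
  rw [absolutelyContinuousOnInterval_iff] at hf ⊢
  intro ε hε
  obtain ⟨δ, hδ, hfδ⟩ := hf (ε / (K + 1)) (by positivity)
  refine ⟨δ, hδ, fun E hE hEδ ↦ ?_⟩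
  calc ∑ i ∈ Finset.range E.1, dist (g (f (E.2 i).1)) (g (f (E.2 i).2))
      ≤ ∑ i ∈ Finset.range E.1, K * dist (f (E.2 i).1) (f (E.2 i).2) := by
        gcongr with i hi
        exact hg.dist_le_mul _ (hfs (hE.1 i hi).1) _ (hfs (hE.1 i hi).2)
    _ = K * ∑ i ∈ Finset.range E.1, dist (f (E.2 i).1) (f (E.2 i).2) := by
        rw [Finset.mul_sum]
    _ ≤ K * (ε / (K + 1)) := by gcongr; exact (hfδ E hE hEδ).le
    _ < (K + 1) * (ε / (K + 1)) := by gcongr; linarith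
    _ = ε := by field_simp

def invPrimitive (φ : ℝ → ℝ) (s : ℝ) : ℝ := ∫ u in (1 : ℝ)..s, (φ u)⁻¹

namespace ClassP

variable {φ : ℝ → ℝ}

theorem pos (hφ : ClassP φ) {s : ℝ} (hs : 0 < s) : 0 < φ s := hφ.2.2 s hs

theorem nonneg (hφ : ClassP φ) {s : ℝ} (hs : 0 ≤ s) : 0 ≤ φ s := by
  rcases hs.eq_or_lt with rfl | hs
  · exact hφ.2.1.ge
  · exact (hφ.pos hs).le

theorem continuousOn_inv (hφ : ClassP φ) : ContinuousOn (fun u ↦ (φ u)⁻¹) (Ioi 0) :=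
  (hφ.1.mono Ioi_subset_Ici_self).inv₀ fun _ hs ↦ (hφ.pos hs).ne'

theorem hasDerivAt_invPrimitive (hφ : ClassP φ) {s : ℝ} (hs : 0 < s) :
    HasDerivAt (invPrimitive φ) (φ s)⁻¹ s := by
  have hcont : ContinuousOn (fun u ↦ (φ u)⁻¹) (uIcc 1 s) :=
    hφ.continuousOn_inv.mono fun u hu ↦ lt_of_lt_of_le (lt_min one_pos hs) hu.1
  exact intervalIntegral.integral_hasDerivAt_right hcont.intervalIntegrable
    (hφ.continuousOn_inv.stronglyMeasurableAtFilter isOpen_Ioi s hs)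
    (hφ.continuousOn_inv.continuousAt (Ioi_mem_nhds hs))

theorem continuousOn_invPrimitive (hφ : ClassP φ) : ContinuousOn (invPrimitive φ) (Ioi 0) :=
  fun _ hs ↦ (hφ.hasDerivAt_invPrimitive hs).continuousAt.continuousWithinAt

theorem strictMonoOn_invPrimitive (hφ : ClassP φ) : StrictMonoOn (invPrimitive φ) (Ioi 0) := by
  refine strictMonoOn_of_deriv_pos (convex_Ioi 0) hφ.continuousOn_invPrimitive fun s hs ↦ ?_
  rw [interior_Ioi] at hs
  rw [(hφ.hasDerivAt_invPrimitive hs).deriv]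
  exact inv_pos.2 (hφ.pos hs)

theorem exists_lipschitzOnWith_invPrimitive (hφ : ClassP φ) {a b : ℝ} (ha : 0 < a) :
    ∃ K, LipschitzOnWith K (invPrimitive φ) (Icc a b) := by
  have hpos : Icc a b ⊆ Ioi 0 := fun u hu ↦ ha.trans_le hu.1
  obtain ⟨C, hC⟩ := isCompact_Icc.exists_bound_of_continuousOn (hφ.continuousOn_inv.mono hpos)
  refine ⟨C.toNNReal, (convex_Icc a b).lipschitzOnWith_of_nnnorm_hasDerivWithin_le
    (fun s hs ↦ (hφ.hasDerivAt_invPrimitive (hpos hs)).hasDerivWithinAt) fun s hs ↦ ?_⟩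
  rw [← NNReal.coe_le_coe, coe_nnnorm, Real.coe_toNNReal']
  exact (hC s hs).trans (le_max_left _ _)

/-- The added `x` makes this a bijection of `ℝ` even when `1 / φ` is integrable near `0` or
near `∞`. -/
def logLyapunov (φ : ℝ → ℝ) (x : ℝ) : ℝ := invPrimitive φ (exp x) + x

theorem strictMono_logLyapunov (hφ : ClassP φ) : StrictMono (logLyapunov φ) := fun x y hxy ↦
  add_lt_add (hφ.strictMonoOn_invPrimitive (exp_pos x) (exp_pos y) (exp_lt_exp.2 hxy)) hxy

theorem surjective_logLyapunov (hφ : ClassP φ) : Function.Surjective (logLyapunov φ) := by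
  have hzero : invPrimitive φ 1 = 0 := intervalIntegral.integral_same
  have hmono := hφ.strictMonoOn_invPrimitive.monotoneOn
  refine Continuous.surjective ?_ ?_ ?_
  · exact (hφ.continuousOn_invPrimitive.comp_continuous continuous_exp exp_pos).add continuous_id
  · refine tendsto_atTop_mono' _ (eventually_ge_atTop 0 |>.mono fun x hx ↦ ?_) tendsto_id
    have := hmono (mem_Ioi.2 one_pos) (exp_pos x) (one_le_exp hx)
    simp only [logLyapunov, id]; linarith
  · refine tendsto_atBot_mono' _ (eventually_le_atBot 0 |>.mono fun x hx ↦ ?_) tendsto_id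
    have := hmono (exp_pos x) (mem_Ioi.2 one_pos) (exp_le_one_iff.2 hx)
    simp only [logLyapunov, id]; linarith

def logLyapunovOrderIso (hφ : ClassP φ) : ℝ ≃o ℝ :=
  StrictMono.orderIsoOfSurjective _ hφ.strictMono_logLyapunov hφ.surjective_logLyapunov

end ClassP

namespace IsODESol

variable {φ p w : ℝ → ℝ} {t0 w0 : ℝ}

theorem nonneg (hw : IsODESol p φ t0 w0 w) {t : ℝ} (ht : t0 ≤ t) : 0 ≤ w t := hw.2.1 t ht

theorem antitoneOn (hφ : ClassP φ) (hp : ∀ s, 0 ≤ p s) (hw : IsODESol p φ t0 w0 w) :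
    AntitoneOn w (Ici t0) := by
  intro t1 ht1 t2 ht2 h12
  obtain ⟨hint1, hw1⟩ := hw.2.2 t1 ht1
  obtain ⟨hint2, hw2⟩ := hw.2.2 t2 ht2
  have hnonneg : 0 ≤ ∫ s in t1..t2, p s * φ (w s) :=
    intervalIntegral.integral_nonneg h12 fun s hs ↦
      mul_nonneg (hp s) (hφ.nonneg (hw.nonneg (le_trans ht1 hs.1)))
  have hsplit := intervalIntegral.integral_interval_sub_left hint2 hint1
  rw [hw1, hw2]
  linarith

theorem le_initial (hφ : ClassP φ) (hp : ∀ s, 0 ≤ p s) (hw : IsODESol p φ t0 w0 w) {t : ℝ}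
    (ht : t0 ≤ t) : w t ≤ w0 :=
  hw.1 ▸ hw.antitoneOn hφ hp self_mem_Ici ht ht

theorem invPrimitive_add_integral (hφ : ClassP φ) (hp : LocIntNN p) (ht0 : 0 ≤ t0)
    (hw : IsODESol p φ t0 w0 w) {t : ℝ} (ht : t0 ≤ t) (hwt : 0 < w t) :
    invPrimitive φ (w t) + ∫ s in t0..t, p s = invPrimitive φ w0 := by
  obtain ⟨hfint, -⟩ := hw.2.2 t ht
  have hpint : IntervalIntegrable p volume t0 t := hp.2 t0 t ht0 ht
  set W : ℝ → ℝ := fun x ↦ w0 - ∫ s in t0..x, p s * φ (w s)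
  have hWw : EqOn W w (uIcc t0 t) := fun x hx ↦ by
    rw [uIcc_of_le ht] at hx
    exact (hw.2.2 x hx.1).2.symm
  have hWmaps : MapsTo W (uIcc t0 t) (Icc (w t) w0) := fun x hx ↦ by
    rw [hWw hx, uIcc_of_le ht] at *
    exact ⟨hw.antitoneOn hφ hp.1 hx.1 ht hx.2, hw.le_initial hφ hp.1 hx.1⟩
  obtain ⟨K, hK⟩ := hφ.exists_lipschitzOnWith_invPrimitive (b := w0) hwt
  set F : ℝ → ℝ := fun x ↦ invPrimitive φ (W x) + ∫ s in t0..x, p s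
  have hF_ac : AbsolutelyContinuousOnInterval F t0 t :=
    (hK.comp_absolutelyContinuousOnInterval
      ((LipschitzWith.const w0).lipschitzOnWith.absolutelyContinuousOnInterval.sub
        (hfint.absolutelyContinuousOnInterval_intervalIntegral left_mem_uIcc)) hWmaps).add
      (hpint.absolutelyContinuousOnInterval_intervalIntegral left_mem_uIcc)
  have hF' : ∀ᵐ x, x ∈ uIcc t0 t → HasDerivAt F 0 x := by
    filter_upwards [hfint.ae_hasDerivAt_integral, hpint.ae_hasDerivAt_integral]
      with x hfx hpx hx
    have hWx : 0 < W x := hwt.trans_le (hWmaps hx).1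
    have hφx : φ (w x) ≠ 0 := (hφ.pos (hWw hx ▸ hWx)).ne'
    refine (((hφ.hasDerivAt_invPrimitive hWx).comp x
      ((hfx hx t0 left_mem_uIcc).const_sub w0)).add (hpx hx t0 left_mem_uIcc)).congr_deriv ?_
    rw [hWw hx]
    field_simp
    ring
  obtain ⟨C, hC⟩ := hF_ac.const_of_ae_hasDerivAt_zero hF'
  calc invPrimitive φ (w t) + ∫ s in t0..t, p s = F t := by rw [← hWw right_mem_uIcc]
    _ = F t0 := (hC t right_mem_uIcc).trans (hC t0 left_mem_uIcc).symm
    _ = invPrimitive φ w0 := by simp [F, W]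

end IsODESol

namespace LocIntNN

variable {p : ℝ → ℝ} {θ : ℝ}

theorem Nval_le_integral (hp : LocIntNN p) (hθ : 0 < θ) {a : ℝ} (ha : 0 ≤ a) :
    Nval p θ ≤ ∫ s in a..a + θ, p s := by
  refine csInf_le ⟨0, ?_⟩ ⟨a, ha, rfl⟩
  rintro _ ⟨b, -, rfl⟩
  exact intervalIntegral.integral_nonneg (by linarith) fun s _ ↦ hp.1 s

theorem nat_mul_Nval_le_integral (hp : LocIntNN p) (hθ : 0 < θ) {t0 : ℝ} (ht0 : 0 ≤ t0)
    (k : ℕ) : k * Nval p θ ≤ ∫ s in t0..t0 + k * θ, p s := by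
  induction k with
  | zero => simp
  | succ k ih =>
    have hk : t0 ≤ t0 + k * θ := le_add_of_nonneg_right (by positivity)
    have hsplit := intervalIntegral.integral_add_adjacent_intervals
      (hp.2 t0 _ ht0 hk) (hp.2 _ (t0 + k * θ + θ) (ht0.trans hk) (by linarith))
    have hstep := hp.Nval_le_integral hθ (ht0.trans hk)
    rw [Nat.cast_succ, add_one_mul, add_one_mul, ← add_assoc, ← hsplit]
    linarith

theorem Nval_mul_le_integral (hp : LocIntNN p) (hθ : 0 < θ) (hN : 0 ≤ Nval p θ) {t0 t : ℝ}
    (ht0 : 0 ≤ t0) (ht : t0 ≤ t) : Nval p θ * max ((t - t0) / θ - 1) 0 ≤ ∫ s in t0..t, p s := by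
  set k := ⌊(t - t0) / θ⌋₊
  have hkθ : t0 + k * θ ≤ t := by
    have := Nat.floor_le (div_nonneg (sub_nonneg.2 ht) hθ.le)
    rw [le_div_iff₀ hθ] at this
    linarith
  have hmax : max ((t - t0) / θ - 1) 0 ≤ k :=
    max_le (by linarith [Nat.lt_floor_add_one ((t - t0) / θ)]) k.cast_nonneg
  calc Nval p θ * max ((t - t0) / θ - 1) 0
      ≤ k * Nval p θ := by rw [mul_comm]; exact mul_le_mul_of_nonneg_right hmax hN
    _ ≤ ∫ s in t0..t0 + k * θ, p s := hp.nat_mul_Nval_le_integral hθ ht0 k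
    _ ≤ ∫ s in t0..t, p s :=
      intervalIntegral.integral_mono_interval le_rfl (le_add_of_nonneg_right (by positivity)) hkθ
        (ae_of_all _ fun s ↦ hp.1 s) (hp.2 t0 t ht0 ht)

end LocIntNN

def decayBound (e : ℝ ≃o ℝ) (g : ℝ → ℝ) (r t : ℝ) : ℝ :=
  if 0 < r then exp (e.symm (e (log r) - g t)) else 0

namespace decayBound

variable {e : ℝ ≃o ℝ} {g : ℝ → ℝ}

theorem of_pos {r : ℝ} (hr : 0 < r) (t : ℝ) :
    decayBound e g r t = exp (e.symm (e (log r) - g t)) := if_pos hr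

theorem of_nonpos {r : ℝ} (hr : r ≤ 0) (t : ℝ) : decayBound e g r t = 0 := if_neg hr.not_gt

theorem nonneg (r t : ℝ) : 0 ≤ decayBound e g r t := by
  unfold decayBound; split_ifs <;> positivity

theorem le_self {r t : ℝ} (hr : 0 ≤ r) (hgt : 0 ≤ g t) : decayBound e g r t ≤ r := by
  rcases hr.eq_or_lt with rfl | hr
  · rw [of_nonpos le_rfl]
  calc decayBound e g r t ≤ exp (e.symm (e (log r))) := by
        rw [of_pos hr]; exact exp_le_exp.2 (e.symm.monotone (by linarith))
    _ = r := by rw [e.symm_apply_apply, exp_log hr]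

theorem le_of_le_sub {r s t : ℝ} (hr : 0 < r) (hs : 0 < s) (h : e (log s) ≤ e (log r) - g t) :
    s ≤ decayBound e g r t := by
  rw [of_pos hr, ← exp_log hs, exp_le_exp]
  exact e.le_symm_apply.2 h

theorem strictMonoOn (t : ℝ) : StrictMonoOn (decayBound e g · t) (Ici 0) := by
  intro r₁ hr₁ r₂ hr₂ h
  rcases (mem_Ici.1 hr₁).eq_or_lt with rfl | hr₁
  · simp only [of_nonpos le_rfl, of_pos h]; positivity
  simp only [of_pos hr₁, of_pos (hr₁.trans h), exp_lt_exp, e.symm.lt_iff_lt, sub_lt_sub_iff_right,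
    e.lt_iff_lt]
  exact log_lt_log hr₁ h

theorem antitone (hg : Monotone g) (r : ℝ) : Antitone (decayBound e g r) := by
  intro t₁ t₂ h
  unfold decayBound
  split_ifs
  · exact exp_le_exp.2 (e.symm.monotone (by linarith [hg h]))
  · exact le_rfl

theorem tendsto_atTop (hg : Tendsto g atTop atTop) (r : ℝ) :
    Tendsto (decayBound e g r) atTop (𝓝 0) := by
  by_cases hr : 0 < r
  · rw [funext (of_pos (e := e) (g := g) hr)]
    exact tendsto_exp_atBot.comp (e.symm.tendsto_atBot.comp
      (tendsto_atBot_add_const_left _ _ (tendsto_neg_atTop_atBot.comp hg)))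
  · rw [funext (of_nonpos (e := e) (g := g) (not_lt.1 hr))]
    exact tendsto_const_nhds

theorem continuousOn (hg : Continuous g) (hg0 : ∀ t, 0 ≤ g t) :
    ContinuousOn (fun q : ℝ × ℝ ↦ decayBound e g q.1 q.2) (Ici 0 ×ˢ Ici 0) := by
  rintro ⟨r, t⟩ ⟨hr, -⟩
  rcases (mem_Ici.1 hr).eq_or_lt with rfl | hr
  · show Tendsto _ _ (𝓝 (decayBound e g 0 t))
    rw [of_nonpos le_rfl]
    exact squeeze_zero' (Eventually.of_forall fun q ↦ nonneg q.1 q.2)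
      (eventually_nhdsWithin_of_forall fun q hq ↦ le_self hq.1 (hg0 q.2))
      (continuous_fst.continuousWithinAt.tendsto)
  · have hformula : ContinuousAt (fun q : ℝ × ℝ ↦ exp (e.symm (e (log q.1) - g q.2))) (r, t) :=
      (continuous_exp.comp e.symm.continuous).continuousAt.comp <|
        (e.continuous.continuousAt.comp ((continuousAt_log hr.ne').comp continuousAt_fst)).sub
          (hg.comp continuous_snd).continuousAt
    refine (hformula.congr ?_).continuousWithinAt
    filter_upwards [continuous_fst.continuousAt.eventually (lt_mem_nhds hr)] with q hq
    exact (of_pos hq q.2).symm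

theorem classKL_add_mul_exp (hg : Continuous g) (hg_mono : Monotone g) (hg0 : ∀ t, 0 ≤ g t)
    (hg_top : Tendsto g atTop atTop) : ClassKL fun r t ↦ decayBound e g r t + r * exp (-t) := by
  refine ⟨(continuousOn hg hg0).add (by fun_prop),
    fun r t hr _ ↦ add_nonneg (nonneg r t) (by positivity),
    fun t _ ↦ ⟨(strictMonoOn t).add (fun r₁ _ r₂ _ h ↦ by gcongr), by simp [of_nonpos]⟩,
    fun r hr t₁ t₂ _ h hpos ↦ ?_, fun r _ ↦ ?_⟩
  · rcases hr.eq_or_lt with rfl | hr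
    · simp [of_nonpos] at hpos
    · have hbound := antitone (e := e) hg_mono r h.le
      have hexp : r * exp (-t₂) < r * exp (-t₁) := by gcongr
      linarith
  · simpa using (tendsto_atTop hg_top r).add (tendsto_exp_neg_atTop_nhds_zero.const_mul r)

end decayBound

/-- Lemma 3 b): under the hypotheses of Lemma 3, there is a class-`KL` function `β` such
that every forward solution of `ẇ = −p(t)φ(w)` with `w(t0) = w0 ≥ 0`, `t0 ≥ 0`, satisfies
`w(t) ≤ β(w0, t − t0)` for all `t ≥ t0`. -/
theorem ode_KL_bound (φ p : ℝ → ℝ) (hφ : ClassP φ) (hp : LocIntNN p)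
    (θ : ℝ) (hθ : 0 < θ) (hN : 0 < Nval p θ) :
    ∃ β : ℝ → ℝ → ℝ, ClassKL β ∧
      ∀ t0 : ℝ, 0 ≤ t0 → ∀ w0 : ℝ, 0 ≤ w0 → ∀ w : ℝ → ℝ, IsODESol p φ t0 w0 w →
        ∀ t : ℝ, t0 ≤ t → w t ≤ β w0 (t - t0) := by
  set g : ℝ → ℝ := fun τ ↦ Nval p θ * max (τ / θ - 1) 0
  have hg : Continuous g := by fun_prop
  have hg_mono : Monotone g := fun τ₁ τ₂ h ↦ by dsimp only [g]; gcongr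
  have hg_top : Tendsto g atTop atTop := by
    refine Tendsto.const_mul_atTop hN (tendsto_atTop_mono (fun τ ↦ le_max_left _ _) ?_)
    exact tendsto_atTop_add_const_right atTop (-1) (tendsto_id.atTop_div_const hθ)
  let e := hφ.logLyapunovOrderIso
  refine ⟨fun r t ↦ decayBound e g r t + r * exp (-t),
    decayBound.classKL_add_mul_exp hg hg_mono (fun τ ↦ by positivity) hg_top, ?_⟩
  intro t0 ht0 w0 hw0 w hw t ht
  refine le_add_of_le_of_nonneg ?_ (by positivity)
  rcases (hw.nonneg ht).eq_or_lt with hwt | hwt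
  · exact hwt ▸ decayBound.nonneg _ _
  have hle : w t ≤ w0 := hw.le_initial hφ hp.1 ht
  have hw0_pos : 0 < w0 := hwt.trans_le hle
  refine decayBound.le_of_le_sub hw0_pos hwt ?_
  have hdrop := hw.invPrimitive_add_integral hφ hp ht0 ht hwt
  have hint := hp.Nval_mul_le_integral hθ hN.le ht0 ht
  have hlog := log_le_log hwt hle
  simp only [e, ClassP.logLyapunovOrderIso, StrictMono.coe_orderIsoOfSurjective,
    ClassP.logLyapunov, exp_log hwt, exp_log hw0_pos]
  linarith
end
end
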